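/- If S is a weakly cancellative semigroup and ω is any weight on S, then for all s, t ∈ S the functions 1_{t⁻¹s}/ω and 1_{st⁻¹}/ω belong to c₀(S); consequently ℓ¹(S,ω) is a dual Banach algebra with predual c₀(S). -/

import Mathlib

open Set Filter

/-- A function on `S` "vanishes at infinity" (belongs to `c₀(S)`). -/
def IsC0 {S : Type*} (g : S → ℝ) : Prop := ∀ ε > 0, {x | ε ≤ |g x|}.Finite

/-- A weight on a semigroup: positive and submultiplicative. -/
def IsWeight {S : Type*} [Mul S] (ω : S → ℝ) : Prop :=
  (∀ s, 0 < ω s) ∧ ∀ s t, ω (s * t) ≤ ω s * ω t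

/-- Membership in `ℓ¹(S, ω)`. -/
def MemL1 {S : Type*} (ω f : S → ℝ) : Prop := Summable fun s => |f s| * ω s

/-- Membership in `c₀(S, ω) = {φ ∈ ℓ∞(S,ω) : φ/ω ∈ c₀(S)}`. -/
def IsC0w {S : Type*} (ω φ : S → ℝ) : Prop := IsC0 fun s => φ s / ω s

/-- The left module action `φ · f` of `f ∈ ℓ¹(S,ω)` on `φ ∈ ℓ∞(S,ω)`,
determined by `⟨φ·f, g⟩ = ⟨φ, f*g⟩`; pointwise `(φ·f)(r) = ∑_u f(u) φ(u r)`. -/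
noncomputable def act {S : Type*} [Mul S] (f φ : S → ℝ) : S → ℝ :=
  fun r => ∑' u, f u * φ (u * r)

/-- The right module action `f · φ`, determined by `⟨f·φ, g⟩ = ⟨φ, g*f⟩`;
pointwise `(f·φ)(r) = ∑_u f(u) φ(r u)`. -/
noncomputable def actR {S : Type*} [Mul S] (f φ : S → ℝ) : S → ℝ :=
  fun r => ∑' u, f u * φ (r * u)

/-- A semigroup is weakly cancellative if `s⁻¹F` and `Fs⁻¹` are finite
for every `s` and every finite `F`. -/
def WeaklyCancellative (S : Type*) [Mul S] : Prop :=
  ∀ (s : S) (F : Finset S), {t | s * t ∈ F}.Finite ∧ {t | t * s ∈ F}.Finite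

/-! The indicators are finitely supported because the fibres of `r ↦ t r` and `r ↦ r t` are
finite. Both actions are instances of `r ↦ ∑ᵤ f(u) φ(m u r)` with `ω (m u r) ≤ ω u ω r` and each
`m u` having finite fibres. Dividing by `ω r`, the `u`-th term is dominated by
`|f u| ω u · ‖φ/ω‖∞`, which is summable, and tends to `0` as `r → ∞` because `m u r → ∞`;
dominated convergence for series then gives the claim. -/

open Topology

lemma isC0_iff_tendsto {S : Type*} {g : S → ℝ} : IsC0 g ↔ Tendsto g cofinite (𝓝 0) := by
  simp only [Metric.tendsto_nhds, Real.dist_eq, sub_zero, eventually_cofinite, not_lt]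
  rfl

lemma isC0_of_finite_support {S : Type*} {g : S → ℝ} (h : (Function.support g).Finite) :
    IsC0 g :=
  fun _ hε => h.subset fun _ hx => abs_pos.mp (hε.trans_le hx)

namespace WeaklyCancellative

variable {S : Type*} [Mul S]

lemma finite_setOf_mul_left_eq (hS : WeaklyCancellative S) (t s : S) :
    {r | t * r = s}.Finite := by
  simpa using (hS t {s}).1

lemma finite_setOf_mul_right_eq (hS : WeaklyCancellative S) (t s : S) :
    {r | r * t = s}.Finite := by
  simpa using (hS t {s}).2

lemma tendsto_mul_left (hS : WeaklyCancellative S) (t : S) :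
    Tendsto (t * ·) cofinite cofinite :=
  Tendsto.cofinite_of_finite_preimage_singleton fun s =>
    (hS.finite_setOf_mul_left_eq t s).to_subtype

lemma tendsto_mul_right (hS : WeaklyCancellative S) (t : S) :
    Tendsto (· * t) cofinite cofinite :=
  Tendsto.cofinite_of_finite_preimage_singleton fun s =>
    (hS.finite_setOf_mul_right_eq t s).to_subtype

end WeaklyCancellative

lemma IsC0w.tsum_mul_comp {S : Type*} {ω φ f : S → ℝ} (hφ : IsC0w ω φ) (hf : MemL1 ω f)
    (hω : ∀ s, 0 < ω s) (m : S → S → S) (hm : ∀ u r, ω (m u r) ≤ ω u * ω r)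
    (hm_cofinite : ∀ u, Tendsto (m u) cofinite cofinite) :
    IsC0w ω fun r => ∑' u, f u * φ (m u r) := by
  have hφ' : Tendsto (fun s => φ s / ω s) cofinite (𝓝 0) := isC0_iff_tendsto.mp hφ
  obtain ⟨C, hC⟩ := hφ'.abs.bddAbove_range_of_cofinite
  have hdom : ∀ u r, |f u * φ (m u r) / ω r| ≤ |f u| * ω u * |φ (m u r) / ω (m u r)| := by
    intro u r
    have hωr := hω r
    have hωm := hω (m u r)
    rw [abs_div, abs_div, abs_mul, abs_of_pos hωr, abs_of_pos hωm, div_le_iff₀ hωr]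
    calc |f u| * |φ (m u r)|
        = |f u| * (|φ (m u r)| / ω (m u r)) * ω (m u r) := by field_simp
      _ ≤ |f u| * (|φ (m u r)| / ω (m u r)) * (ω u * ω r) := by gcongr; exact hm u r
      _ = |f u| * ω u * (|φ (m u r)| / ω (m u r)) * ω r := by ring
  refine isC0_iff_tendsto.mpr ?_
  simp_rw [← tsum_div_const]
  rw [← tsum_zero]
  refine tendsto_tsum_of_dominated_convergence (bound := fun u => |f u| * ω u * C)
    (hf.mul_right C) (fun u => ?_) (Eventually.of_forall fun r u => ?_)
  · have hterm : Tendsto (fun r => |f u| * ω u * |φ (m u r) / ω (m u r)|) cofinite (𝓝 0) := by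
      simpa using ((hφ'.comp (hm_cofinite u)).abs.const_mul (|f u| * ω u))
    exact squeeze_zero_norm (hdom u) hterm
  · exact (hdom u r).trans
      (mul_le_mul_of_nonneg_left (hC (mem_range_self _)) (by positivity [hω u]))

/-- If `S` is weakly cancellative then `1_{t⁻¹s}/ω, 1_{st⁻¹}/ω ∈ c₀(S)` for all `s,t`;
consequently `ℓ¹(S,ω)` is a dual Banach algebra with predual `c₀(S)`. -/
theorem dual_of_weaklyCancellative {S : Type*} [Semigroup S] {ω : S → ℝ}
    (hω : IsWeight ω) (hS : WeaklyCancellative S) :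
    (∀ s t : S,
        (IsC0 fun r => Set.indicator {r | t * r = s} (1 : S → ℝ) r / ω r) ∧
        (IsC0 fun r => Set.indicator {r | r * t = s} (1 : S → ℝ) r / ω r)) ∧
      (∀ φ : S → ℝ, IsC0w ω φ → ∀ f : S → ℝ, MemL1 ω f →
        IsC0w ω (act f φ) ∧ IsC0w ω (actR f φ)) := by
  refine ⟨fun s t => ⟨?_, ?_⟩, fun φ hφ f hf => ⟨?_, ?_⟩⟩
  · refine isC0_of_finite_support <| (hS.finite_setOf_mul_left_eq t s).subset ?_
    exact (Function.support_div _ _).trans_subset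
      (inter_subset_left.trans support_indicator_subset)
  · refine isC0_of_finite_support <| (hS.finite_setOf_mul_right_eq t s).subset ?_
    exact (Function.support_div _ _).trans_subset
      (inter_subset_left.trans support_indicator_subset)
  · exact hφ.tsum_mul_comp hf hω.1 (· * ·) hω.2 hS.tendsto_mul_left
  · exact hφ.tsum_mul_comp hf hω.1 (fun u r => r * u)
      (fun u r => (hω.2 r u).trans_eq (mul_comm _ _)) hS.tendsto_mul_right
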